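/- There exists a 2-extendible independence system that is not a good system: the independence system on ground set {a₁,a₂,b₁,b₂,b₃,b₄} whose maximal sets (bases) are A={a₁,a₂}, B={b₁,b₂,b₃,b₄}, C={a₁,b₃,b₄}, D={a₂,b₃,b₄} is 2-extendible, but for the bit-function w with w=2 on {a₁,a₂,b₁} and w=1 on {b₂,b₃,b₄}, the unique lexicographically maximal independent set A satisfies w(A)=4 < 5 = w(B), so A is not weight-maximal. -/

import Mathlib

/-- The weights of the elements of `S`, sorted in decreasing order. -/
noncomputable def sortedDesc {E : Type*} (w : E → ℝ) (S : Finset E) : List ℝ :=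
  (S.val.map w).sort (· ≥ ·)

/-- `S` is `w`-lexicographically larger than `T`. -/
def LexGt {E : Type*} (w : E → ℝ) (S T : Finset E) : Prop :=
  List.Lex (· < ·) (sortedDesc w T) (sortedDesc w S)

/-- `S` is a lexicographically maximal independent set of the system `I`. -/
def LexMaximal {E : Type*} (I : Finset E → Prop) (w : E → ℝ) (S : Finset E) : Prop :=
  I S ∧ ∀ T, I T → ¬ LexGt w T S

/-- The independence system on `{a₁,a₂,b₁,b₂,b₃,b₄}` (encoded as `Fin 6`, with
`a₁=0, a₂=1, b₁=2, b₂=3, b₃=4, b₄=5`) whose bases are `A={a₁,a₂}`, `B={b₁,b₂,b₃,b₄}`,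
`C={a₁,b₃,b₄}`, `D={a₂,b₃,b₄}`. -/
def Istar (S : Finset (Fin 6)) : Prop :=
  S ⊆ {0, 1} ∨ S ⊆ {2, 3, 4, 5} ∨ S ⊆ {0, 4, 5} ∨ S ⊆ {1, 4, 5}

/-- The bit-function taking value `2` on `{a₁,a₂,b₁}` and `1` on `{b₂,b₃,b₄}`. -/
def wstar (e : Fin 6) : ℝ := if e = 0 ∨ e = 1 ∨ e = 2 then 2 else 1

/-!
The weights are at most `2`, and no base other than `A` contains two of the three elements
`a₁, a₂, b₁` of weight `2`. Hence every independent set other than `A` has at most one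
weight-`2` element, so its sorted weight sequence is lexicographically below `(2, 2)`, while
beating `(2, 2)` would need two weights `2` and a third element besides.
Extendibility is a finite check.
-/
section SortedDesc

variable {E : Type*} (w : E → ℝ) (S : Finset E)

theorem mem_sortedDesc {x : ℝ} : x ∈ sortedDesc w S ↔ ∃ e ∈ S, w e = x := by
  simp [sortedDesc]

theorem length_sortedDesc : (sortedDesc w S).length = S.card := by
  simp [sortedDesc]

theorem count_sortedDesc (c : ℝ) :
    (sortedDesc w S).count c = (S.filter (fun e => w e = c)).card := by
  rw [← Multiset.coe_count, sortedDesc, Multiset.sort_eq, Multiset.count_map]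
  simp [Finset.card, Finset.filter_val, eq_comm]

theorem sortedDesc_eq_replicate {c : ℝ} (h : ∀ e ∈ S, w e = c) :
    sortedDesc w S = List.replicate S.card c := by
  rw [List.eq_replicate_iff, length_sortedDesc]
  refine ⟨rfl, fun x hx => ?_⟩
  obtain ⟨e, he, rfl⟩ := (mem_sortedDesc w S).1 hx
  exact h e he

end SortedDesc

section ListLex

variable {α : Type*} [LinearOrder α] {c : α} {l : List α}

theorem List.exists_eq_cons_cons_cons_of_lex_pair (hl : ∀ x ∈ l, x ≤ c)
    (h : List.Lex (· < ·) [c, c] l) : ∃ x t, l = c :: c :: x :: t := by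
  cases h with
  | rel h => exact absurd (hl _ List.mem_cons_self) h.not_ge
  | cons h =>
    cases h with
    | rel h => exact absurd (hl _ (by simp)) h.not_ge
    | cons h =>
      cases h
      exact ⟨_, _, rfl⟩

theorem List.lex_pair_of_count_le_one (hl : ∀ x ∈ l, x ≤ c) (h : l.count c ≤ 1) :
    List.Lex (· < ·) l [c, c] := by
  match l with
  | [] => exact .nil
  | a :: t =>
    obtain ha | rfl := (hl a List.mem_cons_self).lt_or_eq
    · exact .rel ha
    · refine .cons ?_
      match t with
      | [] => exact .nil
      | b :: _ =>
        have hb : b ≠ a := fun hb => by simp [hb] at h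
        exact .rel ((hl b (by simp)).lt_of_ne hb)

end ListLex

def IsExtendible {E : Type*} [DecidableEq E] (I : Finset E → Prop) (k : ℕ) : Prop :=
  ∀ X Y, I X → I Y → ∀ y ∈ Y \ X, ∃ Z ⊆ X \ Y, Z.card ≤ k ∧ I (insert y X \ Z)

set_option maxRecDepth 10000 in
theorem istar_isExtendible_two : IsExtendible Istar 2 := by
  unfold IsExtendible Istar; decide

theorem wstar_le_two (e : Fin 6) : wstar e ≤ 2 := by
  unfold wstar; split_ifs <;> norm_num

theorem wstar_eq_two_iff (e : Fin 6) : wstar e = 2 ↔ e ∈ ({0, 1, 2} : Finset (Fin 6)) := by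
  unfold wstar; split_ifs with h <;> simp [h]

theorem le_two_of_mem_sortedDesc_wstar (S : Finset (Fin 6)) :
    ∀ x ∈ sortedDesc wstar S, x ≤ 2 := by
  intro x hx
  obtain ⟨e, -, rfl⟩ := (mem_sortedDesc wstar S).1 hx
  exact wstar_le_two e

theorem sortedDesc_wstar_pair : sortedDesc wstar {0, 1} = [2, 2] :=
  sortedDesc_eq_replicate wstar _ fun e he => (wstar_eq_two_iff e).2 (by fin_cases he <;> decide)

theorem card_inter_le_one_of_istar :
    ∀ S : Finset (Fin 6), Istar S → S ≠ {0, 1} → (S ∩ {0, 1, 2}).card ≤ 1 := by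
  unfold Istar; decide

theorem count_two_sortedDesc_wstar_le_one {S : Finset (Fin 6)} (hS : Istar S)
    (hne : S ≠ {0, 1}) : (sortedDesc wstar S).count 2 ≤ 1 := by
  simpa only [count_sortedDesc, wstar_eq_two_iff, Finset.filter_mem_eq_inter] using
    card_inter_le_one_of_istar S hS hne

theorem lexGt_pair_of_ne {S : Finset (Fin 6)} (hS : Istar S) (hne : S ≠ {0, 1}) :
    LexGt wstar {0, 1} S := by
  rw [LexGt, sortedDesc_wstar_pair]
  exact List.lex_pair_of_count_le_one (le_two_of_mem_sortedDesc_wstar S)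
    (count_two_sortedDesc_wstar_le_one hS hne)

theorem lexMaximal_istar_pair : LexMaximal Istar wstar {0, 1} := by
  refine ⟨Or.inl subset_rfl, fun T hT hgt => ?_⟩
  rw [LexGt, sortedDesc_wstar_pair] at hgt
  obtain ⟨x, t, hTl⟩ :=
    List.exists_eq_cons_cons_cons_of_lex_pair (le_two_of_mem_sortedDesc_wstar T) hgt
  by_cases hne : T = {0, 1}
  · rw [hne, sortedDesc_wstar_pair] at hTl
    simp at hTl
  · have := count_two_sortedDesc_wstar_le_one hT hne
    simp [hTl, List.count_cons] at this

theorem eq_pair_of_lexMaximal {S : Finset (Fin 6)} (hS : LexMaximal Istar wstar S) :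
    S = {0, 1} := by
  by_contra hne
  exact hS.2 _ lexMaximal_istar_pair.1 (lexGt_pair_of_ne hS.1 hne)

/-- The system `Istar` is 2-extendible but not good: `A = {a₁,a₂}` is the unique
lexicographically maximal independent set for the bit-function `wstar`, yet
`wstar(A) = 4 < 5 = wstar(B)`, so `A` is not weight-maximal. -/
theorem stmt_12 :
    (∀ X Y : Finset (Fin 6), Istar X → Istar Y → ∀ y ∈ Y \ X,
      ∃ Z ⊆ X \ Y, Z.card ≤ 2 ∧ Istar (insert y X \ Z))
    ∧ LexMaximal Istar wstar {0, 1}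
    ∧ (∀ S : Finset (Fin 6), LexMaximal Istar wstar S → S = {0, 1})
    ∧ (∑ e ∈ ({0, 1} : Finset (Fin 6)), wstar e = 4)
    ∧ (∑ e ∈ ({2, 3, 4, 5} : Finset (Fin 6)), wstar e = 5)
    ∧ Istar {2, 3, 4, 5} :=
  ⟨istar_isExtendible_two, lexMaximal_istar_pair, fun _ => eq_pair_of_lexMaximal,
    by simp [wstar]; norm_num, by simp [wstar]; norm_num, Or.inr (Or.inl subset_rfl)⟩
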